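/- Let V be a finite-dimensional real vector space, D ⊆ V ⊕ V* maximally isotropic, Φ ⊆ V a subspace with annihilator Φ⁰ ⊆ V*, and S = {0} ⊕ Φ⁰ ⊆ V ⊕ V*. Set D^S := (D ∩ S⊥) + S. Then D^S + (V ⊕ {0}) = V ⊕ V* if and only if (D + ({0} ⊕ Φ⁰)) ∩ (Φ ⊕ {0}) = {0}. -/

import Mathlib

/-- The orthogonal complement of a subspace `E ⊆ V ⊕ V*` with respect to the canonical
symmetric pairing `⟨(X,ξ),(Y,ζ)⟩ = ζ(X) + ξ(Y)`. -/
def perp {V : Type*} [AddCommGroup V] [Module ℝ V]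
    (E : Submodule ℝ (V × Module.Dual ℝ V)) :
    Submodule ℝ (V × Module.Dual ℝ V) where
  carrier := {p | ∀ q ∈ E, q.2 p.1 + p.2 q.1 = 0}
  add_mem' := by
    intro a b ha hb q hq
    have h1 := ha q hq
    have h2 := hb q hq
    simp only [Prod.fst_add, Prod.snd_add, map_add, LinearMap.add_apply]
    linarith
  zero_mem' := by
    intro q hq
    simp
  smul_mem' := by
    intro c a ha q hq
    have h := ha q hq
    simp only [Prod.smul_fst, Prod.smul_snd, map_smul, LinearMap.smul_apply, smul_eq_mul]
    rw [← mul_add, h, mul_zero]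

/-! `perp` is the orthogonal complement for a nondegenerate reflexive bilinear form, hence an
order-reversing involution of the subspace lattice. Since the subspace `X` on the left of the
equivalence is a join, its orthogonal complement is computed termwise, and using `D⊥ = D`,
`S⊥ = Φ ⊕ V*` and `(V ⊕ 0)⊥ = V ⊕ 0` it is exactly the subspace `(D + S) ∩ (Φ ⊕ 0)` on the
right. So the equivalence is `X = ⊤ ↔ X⊥ = ⊥`. -/

section Pairing

variable {V : Type*} [AddCommGroup V] [Module ℝ V]

noncomputable def pairing : LinearMap.BilinForm ℝ (V × Module.Dual ℝ V) :=
  LinearMap.mk₂ ℝ (fun p q => q.2 p.1 + p.2 q.1)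
    (by intro p p' q; simp only [Prod.fst_add, Prod.snd_add, map_add, LinearMap.add_apply]; ring)
    (by intro c p q; simp only [Prod.smul_fst, Prod.smul_snd, map_smul, LinearMap.smul_apply,
      smul_eq_mul]; ring)
    (by intro p q q'; simp only [Prod.fst_add, Prod.snd_add, map_add, LinearMap.add_apply]; ring)
    (by intro c p q; simp only [Prod.smul_fst, Prod.smul_snd, map_smul, LinearMap.smul_apply,
      smul_eq_mul]; ring)

@[simp] lemma pairing_apply (p q : V × Module.Dual ℝ V) :
    pairing p q = q.2 p.1 + p.2 q.1 := rfl

lemma pairing_isRefl : (pairing (V := V)).IsRefl := by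
  intro p q h
  simp only [pairing_apply] at *
  linarith

lemma mem_perp {E : Submodule ℝ (V × Module.Dual ℝ V)} {p : V × Module.Dual ℝ V} :
    p ∈ perp E ↔ ∀ q ∈ E, q.2 p.1 + p.2 q.1 = 0 := Iff.rfl

lemma perp_eq_orthogonal (E : Submodule ℝ (V × Module.Dual ℝ V)) :
    perp E = pairing.orthogonal E := by
  ext p
  simp only [mem_perp, LinearMap.BilinForm.mem_orthogonal_iff,
    pairing_apply, add_comm]

lemma perp_sup (A C : Submodule ℝ (V × Module.Dual ℝ V)) :
    perp (A ⊔ C) = perp A ⊓ perp C := by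
  ext p
  simp only [Submodule.mem_inf]
  refine ⟨fun h => ⟨fun q hq => h q (Submodule.mem_sup_left hq),
    fun q hq => h q (Submodule.mem_sup_right hq)⟩, ?_⟩
  rintro ⟨hA, hC⟩ q hq
  obtain ⟨a, ha, c, hc, rfl⟩ := Submodule.mem_sup.mp hq
  have hpa := hA a ha
  have hpc := hC c hc
  simp only [Prod.fst_add, Prod.snd_add, map_add, LinearMap.add_apply]
  linarith

lemma perp_prod (A : Submodule ℝ V) (B : Submodule ℝ (Module.Dual ℝ V)) :
    perp (A.prod B) = B.dualCoannihilator.prod A.dualAnnihilator := by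
  ext p
  simp only [mem_perp, Submodule.mem_prod, Submodule.mem_dualCoannihilator,
    Submodule.mem_dualAnnihilator]
  constructor
  · intro h
    exact ⟨fun b hb => by simpa using h (0, b) ⟨A.zero_mem, hb⟩,
      fun a ha => by simpa using h (a, 0) ⟨ha, B.zero_mem⟩⟩
  · rintro ⟨hB, hA⟩ q ⟨ha, hb⟩
    rw [hB _ hb, hA _ ha, add_zero]

variable [FiniteDimensional ℝ V]

lemma pairing_nondegenerate : (pairing (V := V)).Nondegenerate := by
  refine (LinearMap.IsRefl.nondegenerate_iff_separatingLeft (B := pairing (V := V)) pairing_isRefl).mpr fun p h => ?_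
  have h2 : p.2 = 0 := LinearMap.ext fun y => by simpa using h (y, 0)
  have h1 : p.1 = 0 :=
    (Module.forall_dual_apply_eq_zero_iff ℝ p.1).mp fun φ => by simpa using h (0, φ)
  exact Prod.ext h1 h2

lemma perp_perp (E : Submodule ℝ (V × Module.Dual ℝ V)) : perp (perp E) = E := by
  rw [perp_eq_orthogonal, perp_eq_orthogonal]
  exact LinearMap.BilinForm.orthogonal_orthogonal pairing_nondegenerate pairing_isRefl E

lemma perp_inf (A C : Submodule ℝ (V × Module.Dual ℝ V)) :
    perp (A ⊓ C) = perp A ⊔ perp C := by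
  conv_lhs => rw [← perp_perp A, ← perp_perp C, ← perp_sup, perp_perp]

lemma perp_eq_bot_iff {E : Submodule ℝ (V × Module.Dual ℝ V)} : perp E = ⊥ ↔ E = ⊤ := by
  have perp_top : perp (⊤ : Submodule ℝ (V × Module.Dual ℝ V)) = ⊥ := by
    rw [perp_eq_orthogonal]
    exact LinearMap.BilinForm.orthogonal_top_eq_bot pairing_nondegenerate
  refine ⟨fun h => ?_, fun h => h ▸ perp_top⟩
  rw [← perp_perp E, h, ← perp_top, perp_perp]

end Pairing

/-- Let `V` be a finite-dimensional real vector space, `D ⊆ V ⊕ V*`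
maximally isotropic, `Φ ⊆ V` a subspace with annihilator `Φ⁰ ⊆ V*`, and
`S = {0} ⊕ Φ⁰`. Set `D^S := (D ∩ S⊥) + S`. Then `D^S + (V ⊕ {0}) = V ⊕ V*` if and
only if `(D + ({0} ⊕ Φ⁰)) ∩ (Φ ⊕ {0}) = {0}`. -/
theorem stmt_9 {V : Type*} [AddCommGroup V] [Module ℝ V] [FiniteDimensional ℝ V]
    (D : Submodule ℝ (V × Module.Dual ℝ V)) (Φ : Submodule ℝ V)
    (hD : perp D = D) :
    ((D ⊓ perp (Submodule.prod (⊥ : Submodule ℝ V) Φ.dualAnnihilator)) ⊔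
        Submodule.prod (⊥ : Submodule ℝ V) Φ.dualAnnihilator) ⊔
      Submodule.prod (⊤ : Submodule ℝ V) (⊥ : Submodule ℝ (Module.Dual ℝ V)) = ⊤ ↔
    (D ⊔ Submodule.prod (⊥ : Submodule ℝ V) Φ.dualAnnihilator) ⊓
      Submodule.prod Φ (⊥ : Submodule ℝ (Module.Dual ℝ V)) = ⊥ := by
  set S := Submodule.prod (⊥ : Submodule ℝ V) Φ.dualAnnihilator
  have perp_S : perp S = Φ.prod ⊤ := by
    rw [perp_prod, Subspace.dualAnnihilator_dualCoannihilator_eq, Submodule.dualAnnihilator_bot]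
  have perp_horizontal : perp ((⊤ : Submodule ℝ V).prod ⊥) = (⊤ : Submodule ℝ V).prod ⊥ := by
    rw [perp_prod, Submodule.dualCoannihilator_bot, Submodule.dualAnnihilator_top]
  have key : perp (((D ⊓ perp S) ⊔ S) ⊔ (⊤ : Submodule ℝ V).prod ⊥) = (D ⊔ S) ⊓ Φ.prod ⊥ := by
    rw [perp_sup, perp_sup, perp_inf, perp_perp, hD, perp_S, perp_horizontal, inf_assoc,
      Submodule.prod_inf_prod, inf_top_eq, top_inf_eq]
  rw [← key, perp_eq_bot_iff]
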